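/- Let k1, k2 ≥ 1, let C1, C2 : Matrix (Fin k1) (Fin k2) ℝ, and set R = C2 − C1. The bi-matrix game (C1, C2) is potential if and only if R i j − R i' j − R i j' + R i' j' = 0 for all i, i' : Fin k1 and j, j' : Fin k2. -/
import Mathlib

/-- A bi-matrix game `(C1, C2)` is potential if it admits a potential matrix `P`. -/
def IsPotentialBimatrix {k1 k2 : ℕ} (C1 C2 : Matrix (Fin k1) (Fin k2) ℝ) : Prop :=
  ∃ P : Matrix (Fin k1) (Fin k2) ℝ,
    (∀ i i' : Fin k1, ∀ j : Fin k2, C1 i j - C1 i' j = P i j - P i' j) ∧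
    (∀ i : Fin k1, ∀ j j' : Fin k2, C2 i j - C2 i j' = P i j - P i j')

theorem stmt5 (k1 k2 : ℕ) (hk1 : 1 ≤ k1) (hk2 : 1 ≤ k2)
    (C1 C2 R : Matrix (Fin k1) (Fin k2) ℝ) (hR : R = C2 - C1) :
    IsPotentialBimatrix C1 C2 ↔
      ∀ (i i' : Fin k1) (j j' : Fin k2),
        R i j - R i' j - R i j' + R i' j' = 0 := by
  subst hR
  simp only [Matrix.sub_apply]
  constructor
  · rintro ⟨P, h1, h2⟩ i i' j j'
    have a1 := h1 i i' j
    have a2 := h1 i i' j'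
    have b1 := h2 i j j'
    have b2 := h2 i' j j'
    linarith
  · intro h
    have i0 : Fin k1 := ⟨0, hk1⟩
    refine ⟨fun i j => C1 i j + (C2 i0 j - C1 i0 j), ?_, ?_⟩
    · intro i i' j; ring
    · intro i j j'
      have := h i i0 j j'
      dsimp only
      linarith
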